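/- arXiv:math/0703156 — 2 statements merged into one kernel-verified Lean document; each statement's English description precedes it below -/
import Mathlib

section
/- Let P ⊆ ℝⁿ be a uniformly discrete set of finite local complexity. For every r > 0 there exists ε with 0 < ε < 1 such that for every differentiable function φ : ℝⁿ → ℝⁿ with sup_{x ∈ ℝⁿ} ‖Dφ(x) − I‖ < ε the following holds, where r' := r(1 − ε)⁻¹: for all x, y ∈ P, if B_{r'}[φ(P) − φ(x)] = B_{r'}[φ(P) − φ(y)], then B_r[P − x] = B_r[P − y] and for every h ∈ B_r[P − x] one has φ(x + h) − φ(x) = φ(y + h) − φ(y). -/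
open Metric Set

noncomputable section

/-- Euclidean space ℝⁿ. -/
abbrev Euc (n : ℕ) := EuclideanSpace ℝ (Fin n)

/-- The translate `P - x = {p - x : p ∈ P}`. -/
def shiftSet {n : ℕ} (P : Set (Euc n)) (x : Euc n) : Set (Euc n) :=
  (fun p => p - x) '' P

/-- The `r`-patch of `P` around `x`: `B_r[P - x] = B(0,r) ∩ (P - x)`. -/
def patch {n : ℕ} (P : Set (Euc n)) (r : ℝ) (x : Euc n) : Set (Euc n) :=
  ball (0 : Euc n) r ∩ shiftSet P x

/-- `P` is uniformly discrete: there is a positive minimal distance between points. -/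
def UnifDiscrete {n : ℕ} (P : Set (Euc n)) : Prop :=
  ∃ δ > 0, ∀ p ∈ P, ∀ q ∈ P, p ≠ q → δ ≤ ‖p - q‖

/-- `P` is relatively dense: every ball of radius `R` contains a point of `P`. -/
def RelDense {n : ℕ} (P : Set (Euc n)) : Prop :=
  ∃ R > 0, ∀ x : Euc n, ∃ p ∈ P, ‖p - x‖ < R

/-- `P` has finite local complexity: for each `r > 0`, only finitely many `r`-patches
around points of `P`. -/
def FLC {n : ℕ} (P : Set (Euc n)) : Prop :=
  ∀ r > 0, {s : Set (Euc n) | ∃ x ∈ P, s = patch P r x}.Finite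

/-- `f` is `P`-equivariant with range `R`. -/
def EquivRange {n : ℕ} {F : Type*} (P : Set (Euc n)) (R : ℝ) (f : Euc n → F) : Prop :=
  ∀ x y : Euc n, patch P R x = patch P R y → f x = f y

/-- `f` is strongly `P`-equivariant: `P`-equivariant with some finite range `R > 0`. -/
def StrongEquiv {n : ℕ} {F : Type*} (P : Set (Euc n)) (f : Euc n → F) : Prop :=
  ∃ R > 0, EquivRange P R f

/-- `f`, viewed as a function on the subset `Q`, is `P`-equivariant with range `R`. -/
def EquivRangeOn {n : ℕ} {F : Type*} (P Q : Set (Euc n)) (R : ℝ) (f : Euc n → F) : Prop :=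
  ∀ x ∈ Q, ∀ y ∈ Q, patch P R x = patch P R y → f x = f y

/-- `f`, viewed as a function on the subset `Q`, is strongly `P`-equivariant. -/
def StrongEquivOn {n : ℕ} {F : Type*} (P Q : Set (Euc n)) (f : Euc n → F) : Prop :=
  ∃ R > 0, EquivRangeOn P Q R f

/-- `Q` is locally derivable from `P`. -/
def LocallyDerivable {n : ℕ} (P Q : Set (Euc n)) : Prop :=
  ∃ R > 0, ∀ x y : Euc n, patch P R x = patch P R y →
    ({0} : Set (Euc n)) ∩ shiftSet Q x = ({0} : Set (Euc n)) ∩ shiftSet Q y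

/-- Hypothesis (H): for every `r > 0` there is `r' > 0` such that for all `x`,
`B(φ(x), r) ∩ φ(P) ⊆ φ(B(x, r') ∩ P)`. -/
def HypoH {n : ℕ} (P : Set (Euc n)) (φ : Euc n → Euc n) : Prop :=
  ∀ r > 0, ∃ r' > 0, ∀ x : Euc n, ball (φ x) r ∩ (φ '' P) ⊆ φ '' (ball x r' ∩ P)

/-- The pattern metric `D` on closed subsets of ℝⁿ. -/
def patternDist {n : ℕ} (A B : Set (Euc n)) : ℝ :=
  sInf {ε : ℝ | 0 < ε ∧ Metric.hausdorffDist
    ((ball (0 : Euc n) (1 / ε) ∩ A) ∪ sphere (0 : Euc n) (1 / ε))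
    ((ball (0 : Euc n) (1 / ε) ∩ B) ∪ sphere (0 : Euc n) (1 / ε)) ≤ ε}

/-- A continuous `f : ℝⁿ → ℝⁿ` is weakly `P`-equivariant if it is uniformly approximated
by strongly `P`-equivariant continuous functions. -/
def WeakEquiv {n : ℕ} (P : Set (Euc n)) (f : Euc n → Euc n) : Prop :=
  ∀ ε > 0, ∃ g : Euc n → Euc n, Continuous g ∧ StrongEquiv P g ∧ ∀ x : Euc n, ‖f x - g x‖ < ε

/-- `P` is aperiodic: the only translation fixing `P` is `0`. -/
def IsAperiodicSet {n : ℕ} (P : Set (Euc n)) : Prop :=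
  ∀ x : Euc n, shiftSet P x = P → x = 0


/-!
Since `Dφ` is `ε`-close to the identity, `φ - id` is `ε`-Lipschitz, so `φ` moves a difference
vector `h` of `P` by at most `ε ‖h‖`. Uniform discreteness and FLC leave only finitely many
difference vectors of length `< 4r`, hence a positive gap `η` between them. If the `φ`-images of the
`r (1 - ε)⁻¹`-patches at `x` and `y` agree, each `h` in the `r`-patch at `x` is matched by a
difference vector `k` at `y` with `‖k‖ < 4r` and `‖k - h‖ < 5εr`; taking `5εr ≤ η` forces `k = h`.
-/

open Filter Topology

section Discreteness

variable {X : Type*} [MetricSpace X] {s : Set X}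

theorem Set.finite_of_pairwise_le_dist_of_isBounded [ProperSpace X] {δ : ℝ} (hδ : 0 < δ)
    (hsep : s.Pairwise fun a b => δ ≤ dist a b) (hs : Bornology.IsBounded s) : s.Finite := by
  have : DiscreteTopology s :=
    DiscreteTopology.of_forall_le_dist hδ fun a b hab => hsep a.2 b.2 (Subtype.coe_ne_coe.2 hab)
  exact (isCompact_of_isClosed_isBounded (isClosed_of_pairwise_le_dist hδ hsep) hs).finite
    (isDiscrete_iff_discreteTopology.2 this)

theorem Set.Finite.exists_pos_pairwise_le_dist (hs : s.Finite) :
    ∃ η > 0, s.Pairwise fun a b => η ≤ dist a b := by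
  have hpairs : (s ×ˢ s \ {q | q.1 = q.2}).Finite := (hs.prod hs).sdiff
  have hsmall : ∀ᶠ η in 𝓝[>] (0 : ℝ), ∀ q ∈ s ×ˢ s \ {q | q.1 = q.2}, η ≤ dist q.1 q.2 :=
    (hpairs.eventually_all).2 fun q hq =>
      nhdsWithin_le_nhds (eventually_le_nhds (dist_pos.2 hq.2))
  obtain ⟨η, hη, hpos⟩ := (hsmall.and self_mem_nhdsWithin).exists
  exact ⟨η, hpos, fun a ha b hb hab => hη (a, b) ⟨⟨ha, hb⟩, hab⟩⟩

end Discreteness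

section NearIdentity

variable {E : Type*} [NormedAddCommGroup E] {φ : E → E} {ε : ℝ}

/-- `φ - id` is `ε`-Lipschitz. -/
def NearIdentity (ε : ℝ) (φ : E → E) : Prop :=
  ∀ x h, ‖φ (x + h) - φ x - h‖ ≤ ε * ‖h‖

theorem Differentiable.nearIdentity [NormedSpace ℝ E] (hφ : Differentiable ℝ φ)
    (hder : ∀ x, ‖fderiv ℝ φ x - ContinuousLinearMap.id ℝ E‖ ≤ ε) : NearIdentity ε φ :=
  fun x h => by
    simpa using convex_univ.norm_image_sub_le_of_norm_fderiv_le' (fun z _ => hφ z)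
      (fun z _ => hder z) (mem_univ x) (mem_univ (x + h))

theorem NearIdentity.norm_map_add_sub_le (hφ : NearIdentity ε φ) (x h : E) :
    ‖φ (x + h) - φ x‖ ≤ (1 + ε) * ‖h‖ := by
  have := norm_sub_norm_le (φ (x + h) - φ x) h
  linarith [hφ x h]

theorem NearIdentity.le_norm_map_add_sub (hφ : NearIdentity ε φ) (x h : E) :
    (1 - ε) * ‖h‖ ≤ ‖φ (x + h) - φ x‖ := by
  have := norm_sub_norm_le h (φ (x + h) - φ x)
  rw [norm_sub_rev h] at this
  linarith [hφ x h]

end NearIdentity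

section Patches

variable {n : ℕ} {P : Set (Euc n)}

theorem mem_patch_iff {r : ℝ} {x h : Euc n} : h ∈ patch P r x ↔ ‖h‖ < r ∧ x + h ∈ P := by
  simp only [patch, shiftSet, mem_inter_iff, mem_ball_zero_iff, mem_image]
  refine and_congr_right fun _ => ⟨?_, fun hP => ⟨x + h, hP, add_sub_cancel_left x h⟩⟩
  rintro ⟨p, hp, rfl⟩
  rwa [add_sub_cancel]

theorem UnifDiscrete.finite_patch (hUD : UnifDiscrete P) (r : ℝ) (x : Euc n) :
    (patch P r x).Finite := by
  obtain ⟨δ, hδ, hsep⟩ := hUD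
  refine Set.finite_of_pairwise_le_dist_of_isBounded hδ ?_ (isBounded_ball.subset inter_subset_left)
  intro a ha b hb hab
  rw [mem_patch_iff] at ha hb
  simpa [dist_eq_norm] using hsep _ ha.2 _ hb.2 (by simpa using hab)

theorem finite_biUnion_patch (hUD : UnifDiscrete P) (hFLC : FLC P) {r : ℝ} (hr : 0 < r) :
    (⋃ x ∈ P, patch P r x).Finite := by
  refine ((hFLC r hr).sUnion ?_).subset ?_
  · rintro _ ⟨x, -, rfl⟩
    exact hUD.finite_patch r x
  · exact iUnion₂_subset fun x hx => subset_sUnion_of_mem ⟨x, hx, rfl⟩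

variable {φ : Euc n → Euc n} {ε r : ℝ} {x y h : Euc n}

theorem NearIdentity.exists_mem_patch_of_patch_image_eq (hφ : NearIdentity ε φ) (hε : ε ≤ 1 / 2)
    (hpatch : patch (φ '' P) (r * (1 - ε)⁻¹) (φ x) = patch (φ '' P) (r * (1 - ε)⁻¹) (φ y))
    (hh : h ∈ patch P r x) : ∃ k ∈ patch P (4 * r) y, φ (y + k) - φ y = φ (x + h) - φ x := by
  rw [mem_patch_iff] at hh
  have h1ε : 0 < 1 - ε := by linarith
  have hstep : ‖φ (x + h) - φ x‖ < r * (1 - ε)⁻¹ := by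
    rw [← div_eq_mul_inv, lt_div_iff₀ h1ε]
    calc ‖φ (x + h) - φ x‖ * (1 - ε) ≤ (1 + ε) * ‖h‖ * (1 - ε) :=
          mul_le_mul_of_nonneg_right (hφ.norm_map_add_sub_le x h) h1ε.le
      _ = ‖h‖ - ε ^ 2 * ‖h‖ := by ring
      _ ≤ ‖h‖ := sub_le_self _ (by positivity)
      _ < r := hh.1
  have himage : φ (x + h) - φ x ∈ patch (φ '' P) (r * (1 - ε)⁻¹) (φ x) :=
    mem_patch_iff.2 ⟨hstep, by simpa using mem_image_of_mem φ hh.2⟩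
  rw [hpatch, mem_patch_iff] at himage
  obtain ⟨-, q, hq, hqeq⟩ := himage
  refine ⟨q - y, mem_patch_iff.2 ⟨?_, by simpa using hq⟩,
    by rw [add_sub_cancel, hqeq, add_sub_cancel_left]⟩
  have hlow := hφ.le_norm_map_add_sub y (q - y)
  rw [add_sub_cancel, hqeq, add_sub_cancel_left] at hlow
  rw [← div_eq_mul_inv, lt_div_iff₀ h1ε] at hstep
  have hfactor : 0 ≤ (1 / 2 - ε) * (3 / 2 - ε) * ‖q - y‖ :=
    mul_nonneg (mul_nonneg (by linarith) (by linarith)) (norm_nonneg _)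
  nlinarith [mul_le_mul_of_nonneg_left hlow h1ε.le]

theorem NearIdentity.add_mem_of_patch_image_eq (hφ : NearIdentity ε φ) (hε0 : 0 < ε)
    (hε : ε ≤ 1 / 2) {η : ℝ} (hsep : (⋃ z ∈ P, patch P (4 * r) z).Pairwise fun a b => η ≤ dist a b)
    (hη : 5 * r * ε ≤ η) (hx : x ∈ P) (hy : y ∈ P)
    (hpatch : patch (φ '' P) (r * (1 - ε)⁻¹) (φ x) = patch (φ '' P) (r * (1 - ε)⁻¹) (φ y))
    (hh : h ∈ patch P r x) : y + h ∈ P ∧ φ (y + h) - φ y = φ (x + h) - φ x := by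
  obtain ⟨k, hk, hkeq⟩ := hφ.exists_mem_patch_of_patch_image_eq hε hpatch hh
  suffices k = h by
    subst this
    exact ⟨(mem_patch_iff.1 hk).2, hkeq⟩
  rw [mem_patch_iff] at hh hk
  by_contra hne
  have hh4 : h ∈ patch P (4 * r) x := mem_patch_iff.2 ⟨by linarith [norm_nonneg h], hh.2⟩
  have hfar := hsep (mem_biUnion hy (mem_patch_iff.2 hk)) (mem_biUnion hx hh4) hne
  have hdiff : k - h = (φ (x + h) - φ x - h) - (φ (y + k) - φ y - k) := by
    rw [hkeq]; abel
  have hclose : dist k h ≤ ε * ‖h‖ + ε * ‖k‖ := by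
    rw [dist_eq_norm, hdiff]
    exact (norm_sub_le _ _).trans (add_le_add (hφ x h) (hφ y k))
  nlinarith [mul_lt_mul_of_pos_left hh.1 hε0, mul_lt_mul_of_pos_left hk.1 hε0]

theorem NearIdentity.patch_subset_of_patch_image_eq (hφ : NearIdentity ε φ) (hε0 : 0 < ε)
    (hε : ε ≤ 1 / 2) {η : ℝ} (hsep : (⋃ z ∈ P, patch P (4 * r) z).Pairwise fun a b => η ≤ dist a b)
    (hη : 5 * r * ε ≤ η) (hx : x ∈ P) (hy : y ∈ P)
    (hpatch : patch (φ '' P) (r * (1 - ε)⁻¹) (φ x) = patch (φ '' P) (r * (1 - ε)⁻¹) (φ y)) :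
    patch P r x ⊆ patch P r y := fun _ hh =>
  mem_patch_iff.2 ⟨(mem_patch_iff.1 hh).1, (hφ.add_mem_of_patch_image_eq hε0 hε hsep hη hx hy
    hpatch hh).1⟩

end Patches

theorem stmt15 {n : ℕ} (P : Set (Euc n)) (hUD : UnifDiscrete P) (hFLC : FLC P) :
    ∀ r > 0, ∃ ε : ℝ, 0 < ε ∧ ε < 1 ∧
      ∀ φ : Euc n → Euc n, Differentiable ℝ φ →
      (∀ x : Euc n, ‖fderiv ℝ φ x - ContinuousLinearMap.id ℝ (Euc n)‖ < ε) →
      ∀ x ∈ P, ∀ y ∈ P,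
        patch (φ '' P) (r * (1 - ε)⁻¹) (φ x) = patch (φ '' P) (r * (1 - ε)⁻¹) (φ y) →
        patch P r x = patch P r y ∧
          ∀ h ∈ patch P r x, φ (x + h) - φ x = φ (y + h) - φ y := by
  intro r hr
  obtain ⟨η, hη, hsep⟩ :=
    (finite_biUnion_patch hUD hFLC (by positivity : 0 < 4 * r)).exists_pos_pairwise_le_dist
  set ε := min (1 / 2) (η / (5 * r))
  have hε0 : 0 < ε := by positivity
  have hε : ε ≤ 1 / 2 := min_le_left _ _
  have hεη : 5 * r * ε ≤ η := by
    have := min_le_right (1 / 2) (η / (5 * r))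
    rw [le_div_iff₀ (by positivity)] at this
    linarith
  refine ⟨ε, hε0, by linarith, fun φ hφ hder x hx y hy hpatch => ?_⟩
  have hφ' := hφ.nearIdentity fun z => (hder z).le
  exact ⟨(hφ'.patch_subset_of_patch_image_eq hε0 hε hsep hεη hx hy hpatch).antisymm
      (hφ'.patch_subset_of_patch_image_eq hε0 hε hsep hεη hy hx hpatch.symm),
    fun h hh => (hφ'.add_mem_of_patch_image_eq hε0 hε hsep hεη hx hy hpatch hh).2.symm⟩
end
end

section
/- Let P ⊆ ℝⁿ be a Delone set of finite local complexity. There exists ε with 0 < ε < 1 such that for every differentiable function φ : ℝⁿ → ℝⁿ whose derivative map dφ is strongly P-equivariant and which satisfies sup_{x ∈ ℝⁿ} ‖Dφ(x) − I‖ < ε, the map φ is a bijection of ℝⁿ, its inverse φ⁻¹ is differentiable, and the derivative map d(φ⁻¹) is strongly φ(P)-equivariant, i.e. there exists R' > 0 such that for all u, v ∈ ℝⁿ, B_{R'}[φ(P) − u] = B_{R'}[φ(P) − v] implies D(φ⁻¹)(u) = D(φ⁻¹)(v). -/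
open Metric Set

noncomputable section

/-!
Since `‖Dφ - I‖ < ε < 1`, the map `φ - id` is `ε`-Lipschitz, so `φ` is a homeomorphism whose
inverse `ψ` is differentiable with `Dψ(u) = Dφ(ψ u)⁻¹`; it therefore suffices to show
`Dφ x = Dφ y` for `x = ψ u`, `y = ψ v` whenever `φ(P)` looks alike around `u` and `v`.

By finite local complexity, the differences of nearby points of `P` form a finite set, whose
points are `γ` apart for some `γ > 0`. For `ε` small compared with `γ`, two pairs of nearby points
of `P` whose images under `φ` differ by the same vector have the same difference. Matching `φ(P)`
around `u` with `φ(P)` around `v` therefore moves every point of `P` near `x` by one vector `w`,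
as relative density joins any two of them by a chain of short steps. So `P` looks alike around
`x` and `x + w`, hence `Dφ (x + z) = Dφ (x + w + z)` for small `z` by equivariance; then
`φ (· + w) - φ` is constant near `x`, which forces `φ (x + w) = v`, i.e. `x + w = y`.
-/

open Function
open scoped Pointwise NNReal

section Patches

variable {n : ℕ}

lemma mem_shiftSet {P : Set (Euc n)} {x y : Euc n} : y ∈ shiftSet P x ↔ y + x ∈ P := by
  simp [shiftSet, sub_eq_iff_eq_add]

lemma mem_patch {P : Set (Euc n)} {r : ℝ} {x y : Euc n} :
    y ∈ patch P r x ↔ ‖y‖ < r ∧ y + x ∈ P := by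
  rw [patch, mem_inter_iff, mem_ball_zero_iff, mem_shiftSet]

lemma add_sub_mem_of_patch_eq {Q : Set (Euc n)} {r : ℝ} {u v w : Euc n}
    (h : patch Q r u = patch Q r v) (hw : w ∈ Q) (hwu : ‖w - u‖ < r) : w + (v - u) ∈ Q := by
  have hmem : w - u ∈ patch Q r v := h ▸ mem_patch.2 ⟨hwu, by rwa [sub_add_cancel]⟩
  simpa only [add_sub, sub_add_eq_add_sub] using (mem_patch.1 hmem).2

lemma patch_add_eq_of_patch_eq {P : Set (Euc n)} {r s : ℝ} {a b z : Euc n}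
    (h : patch P r a = patch P r b) (hz : ‖z‖ + s ≤ r) :
    patch P s (a + z) = patch P s (b + z) := by
  have key : ∀ c t : Euc n, t ∈ patch P s (c + z) ↔ ‖t‖ < s ∧ t + z ∈ patch P r c := by
    intro c t
    simp only [mem_patch, add_assoc, add_comm z c]
    constructor
    · rintro ⟨ht, hP⟩
      exact ⟨ht, (norm_add_le t z).trans_lt (by linarith), hP⟩
    · rintro ⟨ht, -, hP⟩
      exact ⟨ht, hP⟩
  ext t
  rw [key, key, h]

lemma patch_eq_patch_add {P : Set (Euc n)} {r : ℝ} {x w : Euc n}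
    (hfwd : ∀ p ∈ P, ‖p - x‖ < r → p + w ∈ P)
    (hbwd : ∀ q ∈ P, ‖q - (x + w)‖ < r → q - w ∈ P) :
    patch P r x = patch P r (x + w) := by
  ext t
  simp only [mem_patch, and_congr_right_iff]
  intro ht
  constructor
  · intro hP
    simpa only [add_assoc] using hfwd _ hP (by rwa [add_sub_cancel_right])
  · intro hP
    simpa only [← add_assoc, add_sub_cancel_right] using
      hbwd _ hP (by rwa [add_sub_cancel_right])

lemma UnifDiscrete.finite_inter {P : Set (Euc n)} (hP : UnifDiscrete P) {K : Set (Euc n)}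
    (hK : Bornology.IsBounded K) : (K ∩ P).Finite := by
  obtain ⟨δ, hδ, hsep⟩ := hP
  obtain ⟨t, ht, hcover⟩ :=
    Metric.totallyBounded_iff.1 hK.isCompact_closure.totallyBounded (δ / 2) (half_pos hδ)
  refine (ht.biUnion fun y _ => Set.Subsingleton.finite (s := ball y (δ / 2) ∩ P) ?_).subset ?_
  · rintro p ⟨hpy, hp⟩ q ⟨hqy, hq⟩
    by_contra hpq
    have := hsep p hp q hq hpq
    rw [← dist_eq_norm] at this
    linarith [dist_triangle_right p q y, mem_ball.1 hpy, mem_ball.1 hqy]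
  · rintro p ⟨hpK, hp⟩
    obtain ⟨y, hy, hpy⟩ := mem_iUnion₂.1 (hcover (subset_closure hpK))
    exact mem_biUnion hy ⟨hpy, hp⟩

lemma FLC.finite_ball_inter_sub {P : Set (Euc n)} (hFLC : FLC P) (hUD : UnifDiscrete P) {r : ℝ}
    (hr : 0 < r) : (ball (0 : Euc n) r ∩ (P - P)).Finite := by
  refine ((hFLC r hr).sUnion ?_).subset ?_
  · rintro _ ⟨x, -, rfl⟩
    refine ((hUD.finite_inter (isBounded_ball (x := x) (r := r))).image (· - x)).subset ?_
    intro t ht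
    obtain ⟨htr, htP⟩ := mem_patch.1 ht
    exact ⟨t + x, ⟨by rwa [mem_ball, dist_eq_norm, add_sub_cancel_right], htP⟩,
      add_sub_cancel_right t x⟩
  · rintro d ⟨hd, p, hp, q, hq, rfl⟩
    exact mem_sUnion.2 ⟨patch P r q, ⟨q, hq, rfl⟩,
      mem_patch.2 ⟨mem_ball_zero_iff.1 hd, by rwa [sub_add_cancel]⟩⟩

end Patches

section Separation

variable {E : Type*} [NormedAddCommGroup E]

lemma Set.Finite.exists_pos_le_norm_sub {S : Set E} (hS : S.Finite) :
    ∃ γ > 0, ∀ a ∈ S, ∀ b ∈ S, a ≠ b → γ ≤ ‖a - b‖ := by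
  let pairs := {ab : E × E | ab.1 ∈ S ∧ ab.2 ∈ S ∧ ab.1 ≠ ab.2}
  have hpairs : pairs.Finite := (hS.prod hS).subset fun ab h => ⟨h.1, h.2.1⟩
  rcases pairs.eq_empty_or_nonempty with h | h
  · exact ⟨1, one_pos, fun a ha b hb hab =>
      absurd ⟨ha, hb, hab⟩ (eq_empty_iff_forall_notMem.1 h (a, b))⟩
  obtain ⟨⟨a₀, b₀⟩, ⟨-, -, hab₀⟩, hmin⟩ :=
    exists_min_image pairs (fun ab => ‖ab.1 - ab.2‖) hpairs h
  exact ⟨_, norm_pos_iff.2 (sub_ne_zero.2 hab₀), fun a ha b hb hab => hmin (a, b) ⟨ha, hb, hab⟩⟩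

end Separation

section Chains

variable {E : Type*} [NormedAddCommGroup E] [NormedSpace ℝ E]

/-- The `δ`-balls around the points of `P` where `f` equals `f p`, and those around the points
where it does not, are disjoint and cover the connected set `ball c r`. -/
lemma eq_of_locally_eq_of_forall_exists_norm_sub_lt {α : Type*} {P : Set E} {δ : ℝ}
    (hP : ∀ z, ∃ a ∈ P, ‖a - z‖ < δ) {f : E → α} {c : E} {r : ℝ}
    (hf : ∀ a ∈ P, ∀ b ∈ P, ‖a - c‖ < r + δ → ‖b - c‖ < r + δ → ‖a - b‖ < 2 * δ → f a = f b)
    {p q : E} (hp : p ∈ P) (hq : q ∈ P) (hpc : ‖p - c‖ < r) (hqc : ‖q - c‖ < r) : f p = f q := by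
  let near (s : Set α) : Set E := ⋃ a ∈ {a ∈ P | ‖a - c‖ < r + δ ∧ f a ∈ s}, ball a δ
  have hopen : ∀ s, IsOpen (near s) := fun _ => isOpen_biUnion fun _ _ => isOpen_ball
  have hδ : 0 < δ := by obtain ⟨a, -, ha⟩ := hP 0; exact (norm_nonneg _).trans_lt ha
  have hsame : ∀ a ∈ P, ∀ b ∈ P, ‖a - c‖ < r + δ → ‖b - c‖ < r + δ → ∀ z ∈ ball a δ,
      z ∈ ball b δ → f a = f b := fun a ha b hb hac hbc z hza hzb =>
    hf a ha b hb hac hbc (by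
      rw [← dist_eq_norm]
      linarith [dist_triangle_right a b z, mem_ball'.1 hza, mem_ball'.1 hzb])
  have hcover : ball c r ⊆ near {f p} ∪ near {f p}ᶜ := by
    intro z hz
    obtain ⟨a, ha, haz⟩ := hP z
    have hac : ‖a - c‖ < r + δ := by
      rw [mem_ball, dist_eq_norm] at hz
      linarith [norm_sub_le_norm_sub_add_norm_sub a z c]
    have hza : z ∈ ball a δ := by rwa [mem_ball, dist_eq_norm, norm_sub_rev]
    by_cases hfa : f a = f p
    · exact Or.inl (mem_biUnion ⟨ha, hac, hfa⟩ hza)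
    · exact Or.inr (mem_biUnion ⟨ha, hac, hfa⟩ hza)
  have hdisj : ball c r ∩ (near {f p} ∩ near {f p}ᶜ) = ∅ := by
    refine eq_empty_iff_forall_notMem.2 fun z ⟨_, hz₁, hz₂⟩ => ?_
    obtain ⟨a, ⟨ha, hac, hfa⟩, hza⟩ := mem_iUnion₂.1 hz₁
    obtain ⟨b, ⟨hb, hbc, hfb⟩, hzb⟩ := mem_iUnion₂.1 hz₂
    exact hfb (hsame b hb a ha hbc hac z hzb hza ▸ hfa)
  have hball : ball c r ⊆ near {f p} := by
    refine ((isPreconnected_iff_subset_of_disjoint.1 (convex_ball c r).isPreconnected) _ _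
      (hopen _) (hopen _) hcover hdisj).resolve_right fun h => ?_
    obtain ⟨a, ⟨ha, hac, hfa⟩, hpa⟩ := mem_iUnion₂.1 (h (mem_ball_iff_norm.2 hpc))
    exact hfa (hsame a ha p hp hac (by linarith) p hpa (mem_ball_self hδ))
  obtain ⟨a, ⟨ha, hac, hfa⟩, hqa⟩ := mem_iUnion₂.1 (hball (mem_ball_iff_norm.2 hqc))
  exact hfa.symm.trans (hsame a ha q hq hac (by linarith) q hqa (mem_ball_self hδ))

end Chains

section NearIdentity

variable {E : Type*} [NormedAddCommGroup E] [NormedSpace ℝ E] {φ : E → E} {c : ℝ≥0}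

lemma approximatesLinearOn_id_of_norm_fderiv_sub_id_le (hφ : Differentiable ℝ φ)
    (h : ∀ x, ‖fderiv ℝ φ x - ContinuousLinearMap.id ℝ E‖ ≤ c) :
    ApproximatesLinearOn φ (ContinuousLinearMap.id ℝ E) univ c := fun x _ y _ =>
  convex_univ.norm_image_sub_le_of_norm_fderiv_le' (fun z _ => hφ z) (fun z _ => h z)
    (mem_univ y) (mem_univ x)

namespace ApproximatesLinearOn

lemma norm_sub_le_one_add_mul (hφ : ApproximatesLinearOn φ (ContinuousLinearMap.id ℝ E) univ c)
    (a b : E) : ‖φ a - φ b‖ ≤ (1 + c) * ‖a - b‖ := by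
  have happrox := hφ a trivial b trivial
  have htri := norm_sub_norm_le (φ a - φ b) (a - b)
  simp only [ContinuousLinearMap.id_apply] at happrox
  linarith

lemma one_sub_mul_le_norm_sub (hφ : ApproximatesLinearOn φ (ContinuousLinearMap.id ℝ E) univ c)
    (a b : E) : (1 - c) * ‖a - b‖ ≤ ‖φ a - φ b‖ := by
  have happrox := hφ a trivial b trivial
  have htri := norm_sub_norm_le (a - b) (φ a - φ b)
  rw [norm_sub_rev (a - b)] at htri
  simp only [ContinuousLinearMap.id_apply] at happrox
  linarith

lemma exists_homeomorph_coe_eq [CompleteSpace E]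
    (hφ : ApproximatesLinearOn φ (ContinuousLinearMap.id ℝ E) univ c) (hc : (c : ℝ) < 1) :
    ∃ H : E ≃ₜ E, ⇑H = φ := by
  refine ⟨toHomeomorph (f' := ContinuousLinearEquiv.refl ℝ E) φ hφ ?_, rfl⟩
  rcases subsingleton_or_nontrivial E with hE | hE
  · exact Or.inl hE
  · right
    simpa using NNReal.coe_lt_one.1 hc

/-- The two differences lie in a set whose distinct points are `γ` apart, but differ by less
than `γ`. -/
lemma sub_eq_sub_of_apply_sub_eq
    (hφ : ApproximatesLinearOn φ (ContinuousLinearMap.id ℝ E) univ c) (hc : (c : ℝ) ≤ 1 / 3)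
    {P : Set E} {L γ : ℝ} (hsep : ∀ d₁ ∈ ball (0 : E) (2 * L) ∩ (P - P),
      ∀ d₂ ∈ ball (0 : E) (2 * L) ∩ (P - P), d₁ ≠ d₂ → γ ≤ ‖d₁ - d₂‖)
    (hcγ : 3 * c * L < γ) {p₁ p₂ q₁ q₂ : E} (hp₁ : p₁ ∈ P) (hp₂ : p₂ ∈ P) (hq₁ : q₁ ∈ P)
    (hq₂ : q₂ ∈ P) (h : φ q₁ - φ q₂ = φ p₁ - φ p₂) (hp : ‖p₁ - p₂‖ < L) :
    q₁ - q₂ = p₁ - p₂ := by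
  have hq : ‖q₁ - q₂‖ ≤ 2 * ‖p₁ - p₂‖ := by
    have h₁ := hφ.one_sub_mul_le_norm_sub q₁ q₂
    have h₂ := hφ.norm_sub_le_one_add_mul p₁ p₂
    rw [h] at h₁
    nlinarith [norm_nonneg (q₁ - q₂), norm_nonneg (p₁ - p₂), c.coe_nonneg]
  have hclose : ‖(q₁ - q₂) - (p₁ - p₂)‖ ≤ c * ‖q₁ - q₂‖ + c * ‖p₁ - p₂‖ := by
    have hq' := hφ q₁ trivial q₂ trivial
    have hp' := hφ p₁ trivial p₂ trivial
    simp only [ContinuousLinearMap.id_apply] at hq' hp'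
    rw [h, norm_sub_rev] at hq'
    calc ‖(q₁ - q₂) - (p₁ - p₂)‖
        = ‖(φ p₁ - φ p₂ - (p₁ - p₂)) - (φ p₁ - φ p₂ - (q₁ - q₂))‖ := by congr 1; abel
      _ ≤ _ := norm_sub_le_of_le hp' (by rwa [norm_sub_rev])
      _ = _ := add_comm _ _
  by_contra hne
  have hγ := hsep _ ⟨mem_ball_zero_iff.2 (by linarith), q₁, hq₁, q₂, hq₂, rfl⟩ _
    ⟨mem_ball_zero_iff.2 (by linarith [norm_nonneg (p₁ - p₂)]), p₁, hp₁, p₂, hp₂, rfl⟩ hne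
  nlinarith [norm_nonneg (p₁ - p₂), c.coe_nonneg]

end ApproximatesLinearOn

end NearIdentity

section Calculus

variable {E : Type*} [NormedAddCommGroup E] [NormedSpace ℝ E]

lemma exists_continuousLinearEquiv_coe_eq_of_norm_sub_id_lt_one [CompleteSpace E]
    {A : E →L[ℝ] E} (h : ‖A - ContinuousLinearMap.id ℝ E‖ < 1) :
    ∃ e : E ≃L[ℝ] E, (e : E →L[ℝ] E) = A := by
  have hA : IsUnit A := by
    simpa only [sub_sub_cancel] using
      isUnit_one_sub_of_norm_lt_one (x := 1 - A) (by rwa [norm_sub_rev])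
  exact ⟨ContinuousLinearEquiv.unitsEquiv ℝ E hA.unit, rfl⟩

lemma differentiable_of_rightInverse_of_norm_fderiv_sub_id_lt_one [CompleteSpace E]
    {f g : E → E} (hf : Differentiable ℝ f) (hg : Continuous g) (hfg : RightInverse g f)
    (h : ∀ x, ‖fderiv ℝ f x - ContinuousLinearMap.id ℝ E‖ < 1) : Differentiable ℝ g := by
  intro y
  obtain ⟨e, he⟩ := exists_continuousLinearEquiv_coe_eq_of_norm_sub_id_lt_one (h (g y))
  exact (HasFDerivAt.of_local_left_inverse (f' := e) hg.continuousAt (he ▸ (hf _).hasFDerivAt)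
    (Filter.Eventually.of_forall hfg)).differentiableAt

/-- `fderiv g u` is the two-sided inverse of `fderiv f (g u)`, so it is determined by it. -/
lemma fderiv_eq_fderiv_of_fderiv_apply_eq {f g : E → E} (hgf : LeftInverse g f)
    (hfg : RightInverse g f) (hf : Differentiable ℝ f) (hg : Differentiable ℝ g) {u v : E}
    (h : fderiv ℝ f (g u) = fderiv ℝ f (g v)) : fderiv ℝ g u = fderiv ℝ g v := by
  have hl : (fderiv ℝ g v).comp (fderiv ℝ f (g v)) = ContinuousLinearMap.id ℝ E := by
    have := fderiv_comp (g v) (hg (f (g v))) (hf (g v))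
    rwa [show g ∘ f = id from funext hgf, fderiv_id, hfg v, eq_comm] at this
  have hr : (fderiv ℝ f (g u)).comp (fderiv ℝ g u) = ContinuousLinearMap.id ℝ E := by
    rw [← fderiv_comp _ (hf _) (hg _), show f ∘ g = id from funext hfg, fderiv_id]
  calc fderiv ℝ g u = ((fderiv ℝ g v).comp (fderiv ℝ f (g v))).comp (fderiv ℝ g u) := by
        rw [hl, ContinuousLinearMap.id_comp]
    _ = (fderiv ℝ g v).comp ((fderiv ℝ f (g u)).comp (fderiv ℝ g u)) := by
        rw [← h, ContinuousLinearMap.comp_assoc]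
    _ = fderiv ℝ g v := by rw [hr, ContinuousLinearMap.comp_id]

lemma apply_add_sub_apply_add_eq {F : Type*} [NormedAddCommGroup F] [NormedSpace ℝ F]
    {f : E → F} (hf : Differentiable ℝ f) {a b : E} {r : ℝ}
    (h : ∀ z, ‖z‖ < r → fderiv ℝ f (a + z) = fderiv ℝ f (b + z)) {z : E} (hz : ‖z‖ < r) :
    f (a + z) - f (b + z) = f a - f b := by
  have h0 : (0 : E) ∈ ball 0 r := mem_ball_self ((norm_nonneg z).trans_lt hz)
  obtain ⟨k, hk⟩ := isOpen_ball.exists_eq_add_of_fderiv_eq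
    (convex_ball (0 : E) r).isPreconnected (f := fun z => f (a + z)) (g := fun z => f (b + z))
    (hf.comp (differentiable_const a |>.add differentiable_id)).differentiableOn
    (hf.comp (differentiable_const b |>.add differentiable_id)).differentiableOn
    fun w hw => by simpa only [fderiv_comp_add_left] using h w (mem_ball_zero_iff.1 hw)
  have hz' : f (a + z) = f (b + z) + k := hk (mem_ball_zero_iff.2 hz)
  have h0' : f (a + 0) = f (b + 0) + k := hk h0
  rw [add_zero, add_zero] at h0'
  rw [hz', h0', add_sub_cancel_left, add_sub_cancel_left]

end Calculus

section Rigidity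

variable {n : ℕ} {P : Set (Euc n)} {φ ψ : Euc n → Euc n} {c : ℝ≥0} {δ γ : ℝ}

lemma apply_add_mem_of_patch_eq
    (hφ : ApproximatesLinearOn φ (ContinuousLinearMap.id ℝ (Euc n)) univ c) (hc : (c : ℝ) ≤ 1)
    (hψφ : LeftInverse ψ φ) {r : ℝ} {x v : Euc n}
    (huv : patch (φ '' P) (2 * r) (φ x) = patch (φ '' P) (2 * r) v) {p : Euc n} (hp : p ∈ P)
    (hpx : ‖p - x‖ < r) :
    ψ (φ p + (v - φ x)) ∈ P ∧ φ (ψ (φ p + (v - φ x))) = φ p + (v - φ x) := by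
  have hpu : ‖φ p - φ x‖ < 2 * r := by
    have := hφ.norm_sub_le_one_add_mul p x
    nlinarith [norm_nonneg (p - x), c.coe_nonneg]
  obtain ⟨q, hq, hφq⟩ := add_sub_mem_of_patch_eq huv (mem_image_of_mem φ hp) hpu
  rw [← hφq, hψφ q]
  exact ⟨hq, rfl⟩

lemma sub_eq_sub_of_patch_eq (hP : ∀ z, ∃ p ∈ P, ‖p - z‖ < δ)
    (hsep : ∀ d₁ ∈ ball (0 : Euc n) (4 * δ) ∩ (P - P),
      ∀ d₂ ∈ ball (0 : Euc n) (4 * δ) ∩ (P - P), d₁ ≠ d₂ → γ ≤ ‖d₁ - d₂‖)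
    (hφ : ApproximatesLinearOn φ (ContinuousLinearMap.id ℝ (Euc n)) univ c)
    (hc : (c : ℝ) ≤ 1 / 3) (hcγ : 6 * c * δ < γ) (hψφ : LeftInverse ψ φ) {ρ : ℝ} {x v : Euc n}
    (huv : patch (φ '' P) (2 * (ρ + δ)) (φ x) = patch (φ '' P) (2 * (ρ + δ)) v)
    {p q : Euc n} (hp : p ∈ P) (hq : q ∈ P) (hpx : ‖p - x‖ < ρ) (hqx : ‖q - x‖ < ρ) :
    ψ (φ p + (v - φ x)) - p = ψ (φ q + (v - φ x)) - q := by
  have hc₁ : (c : ℝ) ≤ 1 := by linarith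
  refine eq_of_locally_eq_of_forall_exists_norm_sub_lt hP
    (f := fun p => ψ (φ p + (v - φ x)) - p) ?_ hp hq hpx hqx
  intro a ha b hb hax hbx hab
  obtain ⟨ha', hφa⟩ := apply_add_mem_of_patch_eq hφ hc₁ hψφ huv ha hax
  obtain ⟨hb', hφb⟩ := apply_add_mem_of_patch_eq hφ hc₁ hψφ huv hb hbx
  rw [show (4 : ℝ) * δ = 2 * (2 * δ) by ring] at hsep
  exact sub_eq_sub_iff_sub_eq_sub.1 <| hφ.sub_eq_sub_of_apply_sub_eq hc hsep (by linarith)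
    ha hb ha' hb' (by rw [hφa, hφb]; abel) hab

lemma exists_patch_eq_patch_add (hP : ∀ z, ∃ p ∈ P, ‖p - z‖ < δ)
    (hsep : ∀ d₁ ∈ ball (0 : Euc n) (4 * δ) ∩ (P - P),
      ∀ d₂ ∈ ball (0 : Euc n) (4 * δ) ∩ (P - P), d₁ ≠ d₂ → γ ≤ ‖d₁ - d₂‖)
    (hφ : ApproximatesLinearOn φ (ContinuousLinearMap.id ℝ (Euc n)) univ c)
    (hc : (c : ℝ) ≤ 1 / 3) (hcγ : 6 * c * δ < γ) (hψφ : LeftInverse ψ φ) {R : ℝ} (hR : 0 ≤ R)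
    {x y : Euc n}
    (hxy : patch (φ '' P) (2 * (R + 5 * δ)) (φ x) = patch (φ '' P) (2 * (R + 5 * δ)) (φ y)) :
    ∃ w p₀, ‖p₀ - x‖ < δ ∧ φ (p₀ + w) - φ p₀ = φ y - φ x ∧
      patch P (R + δ) x = patch P (R + δ) (x + w) := by
  have hc₁ : (c : ℝ) ≤ 1 := by linarith
  set ρ := R + 4 * δ
  rw [show 2 * (R + 5 * δ) = 2 * (ρ + δ) by ring] at hxy
  have match_xy := fun p (hp : p ∈ P) => apply_add_mem_of_patch_eq hφ hc₁ hψφ hxy hp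
  have match_yx := fun q (hq : q ∈ P) => apply_add_mem_of_patch_eq hφ hc₁ hψφ hxy.symm hq
  obtain ⟨p₀, hp₀, hp₀x⟩ := hP x
  have hδ : 0 < δ := (norm_nonneg _).trans_lt hp₀x
  set q₀ := ψ (φ p₀ + (φ y - φ x))
  obtain ⟨hq₀, hφq₀⟩ := match_xy p₀ hp₀ (by linarith)
  have hq₀y : ‖q₀ - y‖ < 2 * δ := by
    have h₁ := hφ.one_sub_mul_le_norm_sub q₀ y
    have h₂ := hφ.norm_sub_le_one_add_mul p₀ x
    rw [hφq₀, show φ p₀ + (φ y - φ x) - φ y = φ p₀ - φ x by abel] at h₁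
    nlinarith [norm_nonneg (q₀ - y), norm_nonneg (p₀ - x), c.coe_nonneg]
  have hfwd : ∀ p ∈ P, ‖p - x‖ < ρ → ψ (φ p + (φ y - φ x)) = p + (q₀ - p₀) :=
    fun p hp hpx =>
    sub_eq_iff_eq_add'.1 <|
      sub_eq_sub_of_patch_eq hP hsep hφ hc hcγ hψφ hxy hp hp₀ hpx (by linarith)
  have hbwd : ∀ q ∈ P, ‖q - y‖ < ρ → ψ (φ q + (φ x - φ y)) = q - (q₀ - p₀) := fun q hq hqy => by
    have h := sub_eq_sub_of_patch_eq hP hsep hφ hc hcγ hψφ hxy.symm hq hq₀ hqy (by linarith)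
    rw [hφq₀, show φ p₀ + (φ y - φ x) + (φ x - φ y) = φ p₀ by abel, hψφ p₀] at h
    rw [sub_eq_iff_eq_add'.1 h]
    abel
  refine ⟨q₀ - p₀, p₀, hp₀x, by rw [add_sub_cancel, hφq₀]; abel, patch_eq_patch_add ?_ ?_⟩
  · intro p hp hpx
    rw [← hfwd p hp (by linarith)]
    exact (match_xy p hp (by linarith)).1
  · intro q hq hqx
    have hqy : ‖q - y‖ < ρ := by
      calc ‖q - y‖ = ‖(q - (x + (q₀ - p₀))) + (x - p₀) + (q₀ - y)‖ := by congr 1; abel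
        _ ≤ ‖q - (x + (q₀ - p₀))‖ + ‖x - p₀‖ + ‖q₀ - y‖ := norm_add₃_le
        _ < ρ := by rw [norm_sub_rev x]; linarith
    rw [← hbwd q hq hqy]
    exact (match_yx q hq (by linarith)).1

lemma fderiv_eq_of_patch_eq (hP : ∀ z, ∃ p ∈ P, ‖p - z‖ < δ)
    (hsep : ∀ d₁ ∈ ball (0 : Euc n) (4 * δ) ∩ (P - P),
      ∀ d₂ ∈ ball (0 : Euc n) (4 * δ) ∩ (P - P), d₁ ≠ d₂ → γ ≤ ‖d₁ - d₂‖)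
    (hφ : ApproximatesLinearOn φ (ContinuousLinearMap.id ℝ (Euc n)) univ c)
    (hc : (c : ℝ) ≤ 1 / 3) (hcγ : 6 * c * δ < γ) (hψφ : LeftInverse ψ φ)
    (hdiff : Differentiable ℝ φ) {R : ℝ} (hR : 0 ≤ R) (hequiv : EquivRange P R (fderiv ℝ φ))
    {x y : Euc n}
    (hxy : patch (φ '' P) (2 * (R + 5 * δ)) (φ x) = patch (φ '' P) (2 * (R + 5 * δ)) (φ y)) :
    fderiv ℝ φ x = fderiv ℝ φ y := by
  obtain ⟨w, p₀, hp₀x, hφw, hpatch⟩ := exists_patch_eq_patch_add hP hsep hφ hc hcγ hψφ hR hxy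
  have hD : ∀ z, ‖z‖ < δ → fderiv ℝ φ (x + z) = fderiv ℝ φ (x + w + z) := fun z hz =>
    hequiv _ _ (patch_add_eq_of_patch_eq hpatch (by linarith))
  have hxw : x + w = y := by
    apply hψφ.injective
    have h := apply_add_sub_apply_add_eq hdiff hD hp₀x
    rw [add_sub_cancel, show x + w + (p₀ - x) = p₀ + w by abel] at h
    calc φ (x + w) = φ x - (φ x - φ (x + w)) := by abel
      _ = φ x + (φ (p₀ + w) - φ p₀) := by rw [← h]; abel
      _ = φ y := by rw [hφw]; abel
  simpa only [add_zero, hxw] using hD 0 (by simpa using (norm_nonneg _).trans_lt hp₀x)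

end Rigidity

theorem stmt18 {n : ℕ} (P : Set (Euc n))
    (hUD : UnifDiscrete P) (hRD : RelDense P) (hFLC : FLC P) :
    ∃ ε : ℝ, 0 < ε ∧ ε < 1 ∧
      ∀ φ : Euc n → Euc n, Differentiable ℝ φ →
      StrongEquiv P (fderiv ℝ φ) →
      (∀ x : Euc n, ‖fderiv ℝ φ x - ContinuousLinearMap.id ℝ (Euc n)‖ < ε) →
      Function.Bijective φ ∧ Differentiable ℝ (Function.invFun φ) ∧
        ∃ R' > 0, ∀ u v : Euc n, patch (φ '' P) R' u = patch (φ '' P) R' v →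
          fderiv ℝ (Function.invFun φ) u = fderiv ℝ (Function.invFun φ) v := by
  obtain ⟨δ, hδ, hP⟩ := hRD
  obtain ⟨γ, hγ, hsep⟩ :=
    (hFLC.finite_ball_inter_sub hUD (by positivity : (0 : ℝ) < 4 * δ)).exists_pos_le_norm_sub
  set ε := min (1 / 3 : ℝ) (γ / (12 * δ))
  have hε : 0 < ε := lt_min (by norm_num) (by positivity)
  have hε₃ : ε ≤ 1 / 3 := min_le_left _ _
  have hε₁ : ε < 1 := hε₃.trans_lt (by norm_num)
  have hεγ : 6 * ε * δ < γ :=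
    calc 6 * ε * δ ≤ 6 * (γ / (12 * δ)) * δ := by gcongr; exact min_le_right _ _
      _ = γ / 2 := by field_simp; ring
      _ < γ := half_lt_self hγ
  refine ⟨ε, hε, hε₁, fun φ hdiff ⟨R, hR, hequiv⟩ hDφ => ?_⟩
  set c : ℝ≥0 := ⟨ε, hε.le⟩
  have hφ := approximatesLinearOn_id_of_norm_fderiv_sub_id_le (c := c) hdiff fun x => (hDφ x).le
  obtain ⟨H, rfl⟩ := hφ.exists_homeomorph_coe_eq hε₁
  have hψφ : LeftInverse (invFun H) H := leftInverse_invFun H.injective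
  have hφψ : RightInverse (invFun H) H := rightInverse_invFun H.surjective
  have hψ_cont : Continuous (invFun H) := H.symm.continuous.congr fun y =>
    H.injective ((H.apply_symm_apply y).trans (hφψ y).symm)
  have hψ := differentiable_of_rightInverse_of_norm_fderiv_sub_id_lt_one hdiff hψ_cont hφψ
    fun x => (hDφ x).trans hε₁
  refine ⟨H.bijective, hψ, 2 * (R + 5 * δ), by positivity, fun u v huv => ?_⟩
  refine fderiv_eq_fderiv_of_fderiv_apply_eq hψφ hφψ hdiff hψ
    (fderiv_eq_of_patch_eq hP hsep hφ hε₃ hεγ hψφ hdiff hR.le hequiv ?_)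
  rwa [hφψ u, hφψ v]
end
end
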